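/- (Riemenschneider duality) Let p > q ≥ 1 be coprime, let q' = p − q, and let p/q = [e_1, …, e_k] and p/q' = [e'_1, …, e'_{k'}] be the Hirzebruch–Jung continued fraction expansions. Then ∑_{i=1}^{k} (e_i − 1) = ∑_{i=1}^{k'} (e'_i − 1), and k' = 1 + ∑_{i=1}^{k} (e_i − 2). -/

import Mathlib

/-- The Hirzebruch–Jung (negative) continued fraction `[e₁, …, e_k]`,
defined by `[e_k] = e_k` and `[e₁, …, e_k] = e₁ - 1/[e₂, …, e_k]`. -/
def hjcf : List ℤ → ℚ
  | [] => 0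
  | [e] => (e : ℚ)
  | e :: rest => (e : ℚ) - 1 / hjcf rest

/-!
Put `x = p/q` and `x' = p/q'`, so that `1/x + 1/x' = 1`. For an expansion `l` of `x` we build
an explicit list `hjcfDual l` (Riemenschneider's point diagram read by columns: each entry `e`
of `l` contributes `e - 2` entries `2` to the dual and raises the next dual entry by one) and
show `1/[l] + 1/[hjcfDual l] = 1`. The engine is that prepending a `2` to a continued fraction
`z` adds `1` to `1/(z - 1)`. Expansions with entries `≥ 2` are unique, since the first entry is
the ceiling of the value; hence `hjcfDual l = l'`, and both identities are read off from the
construction.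
-/

open List

-- `hjcf [] = 0` acts as `∞`: with `0⁻¹ = 0` the recursion holds uniformly, also for `t = []`.
lemma hjcf_cons (e : ℤ) (t : List ℤ) : hjcf (e :: t) = e - (hjcf t)⁻¹ := by
  cases t <;> simp [hjcf]

lemma inv_hjcf_mem_Ico : ∀ {l : List ℤ}, (∀ e ∈ l, 2 ≤ e) → (hjcf l)⁻¹ ∈ Set.Ico (0 : ℚ) 1
  | [], _ => by simp [hjcf]
  | e :: t, hl => by
    have he : (2 : ℚ) ≤ e := by exact_mod_cast hl e mem_cons_self
    obtain ⟨h0, h1⟩ := inv_hjcf_mem_Ico fun x hx => hl x (mem_cons_of_mem e hx)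
    rw [hjcf_cons]
    exact ⟨by bound, inv_lt_one_of_one_lt₀ (by linarith)⟩

lemma one_lt_hjcf {l : List ℤ} (hl : l ≠ []) (h2 : ∀ e ∈ l, 2 ≤ e) : 1 < hjcf l := by
  obtain ⟨e, t, rfl⟩ := exists_cons_of_ne_nil hl
  have he : (2 : ℚ) ≤ e := by exact_mod_cast h2 e mem_cons_self
  have := (inv_hjcf_mem_Ico fun x hx => h2 x (mem_cons_of_mem e hx)).2
  rw [hjcf_cons]
  linarith

lemma ceil_hjcf_cons {e : ℤ} {t : List ℤ} (h2 : ∀ x ∈ e :: t, 2 ≤ x) : ⌈hjcf (e :: t)⌉ = e := by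
  obtain ⟨h0, h1⟩ := inv_hjcf_mem_Ico fun x hx => h2 x (mem_cons_of_mem e hx)
  rw [hjcf_cons, Int.ceil_eq_iff]
  constructor <;> linarith

lemma hjcf_injOn : Set.InjOn hjcf {l | ∀ e ∈ l, 2 ≤ e} := by
  intro l hl l' hl' heq
  induction l generalizing l' with
  | nil =>
    cases l' with
    | nil => rfl
    | cons e' t' =>
      have := one_lt_hjcf (cons_ne_nil e' t') hl'
      simp only [hjcf] at heq
      linarith
  | cons e t ih =>
    cases l' with
    | nil =>
      have := one_lt_hjcf (cons_ne_nil e t) hl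
      simp only [hjcf] at heq
      linarith
    | cons e' t' =>
      have he : e = e' := by rw [← ceil_hjcf_cons hl, heq, ceil_hjcf_cons hl']
      subst he
      rw [hjcf_cons, hjcf_cons, sub_right_inj, inv_inj] at heq
      rw [ih (fun x hx => hl x (mem_cons_of_mem e hx))
        (fun x hx => hl' x (mem_cons_of_mem e hx)) heq]

lemma hjcf_modifyHead_add_one {s : List ℤ} (hs : s ≠ []) :
    hjcf (s.modifyHead (· + 1)) = hjcf s + 1 := by
  obtain ⟨a, t, rfl⟩ := exists_cons_of_ne_nil hs
  simp only [modifyHead_cons, hjcf_cons]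
  push_cast
  ring

lemma inv_hjcf_two_cons_sub_one {s : List ℤ} (hs : 1 < hjcf s) :
    (hjcf (2 :: s) - 1)⁻¹ = (hjcf s - 1)⁻¹ + 1 := by
  have : hjcf s ≠ 0 := by linarith
  have : hjcf s - 1 ≠ 0 := by linarith
  have hfrac : ((2 : ℤ) : ℚ) - (hjcf s)⁻¹ - 1 = (hjcf s - 1) / hjcf s := by
    push_cast
    field_simp
    ring
  rw [hjcf_cons, hfrac, inv_div]
  field_simp
  ring

lemma one_lt_hjcf_replicate_two_append {t : List ℤ} (ht : 1 < hjcf t) (n : ℕ) :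
    1 < hjcf (replicate n 2 ++ t) := by
  induction n with
  | zero => simpa using ht
  | succ n ih =>
    rw [replicate_succ, cons_append, hjcf_cons]
    have := inv_lt_one_of_one_lt₀ ih
    push_cast
    linarith

lemma inv_hjcf_replicate_two_append_sub_one {t : List ℤ} (ht : 1 < hjcf t) (n : ℕ) :
    (hjcf (replicate n 2 ++ t) - 1)⁻¹ = (hjcf t - 1)⁻¹ + n := by
  induction n with
  | zero => simp
  | succ n ih =>
    rw [replicate_succ, cons_append,
      inv_hjcf_two_cons_sub_one (one_lt_hjcf_replicate_two_append ht n), ih]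
    push_cast
    ring

-- `hjcfDual [] = [1]` is only a seed: the last entry of `l` raises it to `2`.
def hjcfDual : List ℤ → List ℤ
  | [] => [1]
  | e :: t => replicate (e - 2).toNat 2 ++ (hjcfDual t).modifyHead (· + 1)

lemma hjcfDual_ne_nil (l : List ℤ) : hjcfDual l ≠ [] := by
  induction l <;> simp_all [hjcfDual]

lemma two_le_of_mem_hjcfDual : ∀ {l : List ℤ}, l ≠ [] → ∀ x ∈ hjcfDual l, 2 ≤ x
  | [], hl => absurd rfl hl
  | [e], _ => by
    intro x hx
    simp [hjcfDual] at hx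
    omega
  | e :: a :: t, _ => by
    intro x hx
    obtain ⟨b, s, hbs⟩ := exists_cons_of_ne_nil (hjcfDual_ne_nil (a :: t))
    have ih := two_le_of_mem_hjcfDual (cons_ne_nil a t)
    rw [hjcfDual, hbs, modifyHead_cons, mem_append, mem_cons] at hx
    rw [hbs] at ih
    rcases hx with hx | rfl | hx
    · exact (eq_of_mem_replicate hx).ge
    · linarith [ih b mem_cons_self]
    · exact ih x (mem_cons_of_mem b hx)

lemma length_hjcfDual : ∀ {l : List ℤ}, (∀ e ∈ l, 2 ≤ e) →
    ((hjcfDual l).length : ℤ) = 1 + (l.map (· - 2)).sum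
  | [], _ => by simp [hjcfDual]
  | e :: t, hl => by
    have he := hl e mem_cons_self
    have ih := length_hjcfDual fun x hx => hl x (mem_cons_of_mem e hx)
    simp only [hjcfDual, length_append, length_replicate, length_modifyHead, map_cons, sum_cons]
    omega

lemma sum_hjcfDual : ∀ {l : List ℤ}, (∀ e ∈ l, 2 ≤ e) →
    ((hjcfDual l).map (· - 1)).sum = (l.map (· - 1)).sum
  | [], _ => by simp [hjcfDual]
  | e :: t, hl => by
    have he := hl e mem_cons_self
    have ih := sum_hjcfDual fun x hx => hl x (mem_cons_of_mem e hx)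
    obtain ⟨b, s, hbs⟩ := exists_cons_of_ne_nil (hjcfDual_ne_nil t)
    rw [hbs] at ih
    simp only [hjcfDual, hbs, modifyHead_cons, map_append, map_cons, sum_append, sum_cons,
      map_replicate, sum_replicate, nsmul_eq_mul] at ih ⊢
    omega

lemma inv_hjcf_add_inv_hjcf_hjcfDual : ∀ {l : List ℤ}, (∀ e ∈ l, 2 ≤ e) →
    (hjcf l)⁻¹ + (hjcf (hjcfDual l))⁻¹ = 1
  | [], _ => by simp [hjcf, hjcfDual]
  | e :: t, hl => by
    have he : (2 : ℚ) ≤ e := by exact_mod_cast hl e mem_cons_self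
    have ht : ∀ x ∈ t, 2 ≤ x := fun x hx => hl x (mem_cons_of_mem e hx)
    obtain ⟨u0, u1⟩ := inv_hjcf_mem_Ico ht
    set u := (hjcf t)⁻¹ with hu
    have hdual : (hjcf (hjcfDual t))⁻¹ = 1 - u := by
      linarith [inv_hjcf_add_inv_hjcf_hjcfDual ht]
    have hbump : 1 < hjcf ((hjcfDual t).modifyHead (· + 1)) := by
      rw [hjcf_modifyHead_add_one (hjcfDual_ne_nil t)]
      have : 0 < (hjcf (hjcfDual t))⁻¹ := by rw [hdual]; linarith
      linarith [inv_pos.mp this]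
    have hcount : ((e - 2).toNat : ℚ) = e - 2 := by
      exact_mod_cast Int.toNat_of_nonneg (by linarith [hl e mem_cons_self])
    have key := inv_hjcf_replicate_two_append_sub_one hbump (e - 2).toNat
    rw [hjcf_modifyHead_add_one (hjcfDual_ne_nil t), add_sub_cancel_right, hdual, hcount] at key
    have hv : hjcf (hjcfDual (e :: t)) - 1 = (e - 1 - u)⁻¹ := by
      rw [hjcfDual, ← inv_inv (hjcf _ - 1), key]
      ring
    rw [hjcf_cons, ← hu, show hjcf (hjcfDual (e :: t)) = 1 + (e - 1 - u)⁻¹ by linarith]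
    have : (e : ℚ) - 1 - u ≠ 0 := by linarith
    have : (e : ℚ) - u ≠ 0 := by linarith
    rw [show 1 + ((e : ℚ) - 1 - u)⁻¹ = (e - u) / (e - 1 - u) by field_simp; ring, inv_div]
    field_simp
    ring

theorem stmt2_general (p q q' : ℕ) (hpq : q < p)
    (hq' : q' = p - q)
    (l l' : List ℤ) (hl : l ≠ [])
    (hle : ∀ e ∈ l, 2 ≤ e) (hle' : ∀ e ∈ l', 2 ≤ e)
    (hexp : hjcf l = (p : ℚ) / (q : ℚ)) (hexp' : hjcf l' = (p : ℚ) / (q' : ℚ)) :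
    (l.map (fun e => e - 1)).sum = (l'.map (fun e => e - 1)).sum ∧
      (l'.length : ℤ) = 1 + (l.map (fun e => e - 2)).sum := by
  have hp : (p : ℚ) ≠ 0 := Nat.cast_ne_zero.mpr (by omega)
  have hqq' : (q : ℚ) + q' = p := by rw [hq']; exact_mod_cast Nat.add_sub_of_le hpq.le
  have hinv : (hjcf l)⁻¹ + (hjcf l')⁻¹ = 1 := by
    rw [hexp, hexp', inv_div, inv_div, ← add_div, hqq', div_self hp]
  have hval : hjcf (hjcfDual l) = hjcf l' := by
    rw [← inv_inj]
    linarith [inv_hjcf_add_inv_hjcf_hjcfDual hle]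
  obtain rfl : hjcfDual l = l' := hjcf_injOn (two_le_of_mem_hjcfDual hl) hle' hval
  exact ⟨(sum_hjcfDual hle).symm, length_hjcfDual hle⟩

/-- Riemenschneider duality: for coprime `p > q ≥ 1` and `q' = p - q`, if
`p/q = [e₁,…,e_k]` and `p/q' = [e'₁,…,e'_{k'}]` are Hirzebruch–Jung expansions,
then `∑ (eᵢ - 1) = ∑ (e'ᵢ - 1)` and `k' = 1 + ∑ (eᵢ - 2)`. -/
theorem stmt2 (p q q' : ℕ) (hq : 1 ≤ q) (hpq : q < p) (hcop : Nat.Coprime p q)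
    (hq' : q' = p - q)
    (l l' : List ℤ) (hl : l ≠ []) (hl' : l' ≠ [])
    (hle : ∀ e ∈ l, 2 ≤ e) (hle' : ∀ e ∈ l', 2 ≤ e)
    (hexp : hjcf l = (p : ℚ) / (q : ℚ)) (hexp' : hjcf l' = (p : ℚ) / (q' : ℚ)) :
    (l.map (fun e => e - 1)).sum = (l'.map (fun e => e - 1)).sum ∧
      (l'.length : ℤ) = 1 + (l.map (fun e => e - 2)).sum :=
  stmt2_general p q q' hpq hq' l l' hl hle hle' hexp hexp'
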